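/- Every operator φ in the real Lie algebra uL^s is infinitesimally anti-Hermitian for the pairing ⟨,⟩: for all α, β ∈ ⋀_ℂV, ⟨φ(α), β⟩ + ⟨α, φ(β)⟩ = 0. -/

import Mathlib

namespace GG

attribute [local instance 100] LieRing.ofAssociativeRing

/-- Index set for the adapted coframe `v_{ij}`, `i ∈ {1,2}`, `j ∈ {0,…,s}`. -/
abbrev Idx (s : ℕ) := Fin 2 × Fin (s + 1)

/-- Linear-order encoding of the indices. -/
def enc {s : ℕ} (x : Idx s) : ℕ := x.2.1 * 2 + x.1.1

/-- The sign `(-1)^{#{a ∈ S | a < x}}` appearing in wedge/contraction with `v_x`. -/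
def sgn {s : ℕ} (S : Finset (Idx s)) (x : Idx s) : ℝ :=
  (-1 : ℝ) ^ (S.filter fun a => enc a < enc x).card

/-- The exterior algebra `⋀V` of the `2(s+1)`-dimensional real inner product space `V`,
modelled on its orthonormal basis of monomials indexed by subsets of the basis of `V`. -/
abbrev ExtV (s : ℕ) := EuclideanSpace ℝ (Finset (Idx s))

/-- Matrix of exterior multiplication by the basis vector `v_x` on basis monomials. -/
def Emat {s : ℕ} (x : Idx s) : Matrix (Finset (Idx s)) (Finset (Idx s)) ℝ :=
  Matrix.of fun T S => if x ∉ S ∧ T = insert x S then sgn S x else 0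

/-- Matrix of contraction with `∂/∂v_x` on basis monomials. -/
def Imat {s : ℕ} (x : Idx s) : Matrix (Finset (Idx s)) (Finset (Idx s)) ℝ :=
  Matrix.of fun T S => if x ∈ S ∧ T = S.erase x then sgn S x else 0

/-- The wedge operator `E_{ij}` on `⋀V`. -/
noncomputable def Eop {s : ℕ} (x : Idx s) : Module.End ℝ (ExtV s) :=
  Matrix.toEuclideanLin (Emat x)

/-- The contraction operator `I_{ij}` on `⋀V`. -/
noncomputable def Iop {s : ℕ} (x : Idx s) : Module.End ℝ (ExtV s) :=
  Matrix.toEuclideanLin (Imat x)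

/-- The complexification `⋀_ℂ V` of `⋀V`. -/
abbrev ExtVC (s : ℕ) := EuclideanSpace ℂ (Finset (Idx s))

/-- The ℂ-linear extension of the wedge operator `E_{ij}`. -/
noncomputable def EopC {s : ℕ} (x : Idx s) : Module.End ℂ (ExtVC s) :=
  Matrix.toEuclideanLin ((Emat x).map Complex.ofReal)

/-- The ℂ-linear extension of the contraction operator `I_{ij}`. -/
noncomputable def IopC {s : ℕ} (x : Idx s) : Module.End ℂ (ExtVC s) :=
  Matrix.toEuclideanLin ((Imat x).map Complex.ofReal)

/-- `L_{jk} = Σ_i E_{ij}∘E_{ik}` on `⋀_ℂ V`. -/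
noncomputable def LCop {s : ℕ} (j k : Fin (s + 1)) : Module.End ℂ (ExtVC s) :=
  ∑ i : Fin 2, EopC (i, j) * EopC (i, k)

/-- `Λ_{jk} = Σ_i I_{ik}∘I_{ij}` on `⋀_ℂ V`. -/
noncomputable def LamC {s : ℕ} (j k : Fin (s + 1)) : Module.End ℂ (ExtVC s) :=
  ∑ i : Fin 2, IopC (i, k) * IopC (i, j)

/-- `V_j = E_{1j}∘E_{2j}` on `⋀_ℂ V`. -/
noncomputable def VopC {s : ℕ} (j : Fin (s + 1)) : Module.End ℂ (ExtVC s) :=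
  EopC (0, j) * EopC (1, j)

/-- `A_j = I_{2j}∘I_{1j}` on `⋀_ℂ V`. -/
noncomputable def AopC {s : ℕ} (j : Fin (s + 1)) : Module.End ℂ (ExtVC s) :=
  IopC (1, j) * IopC (0, j)

/-- `J = Σ_j (E_{2j}∘I_{1j} − E_{1j}∘I_{2j})` on `⋀_ℂ V`. -/
noncomputable def JC (s : ℕ) : Module.End ℂ (ExtVC s) :=
  ∑ j : Fin (s + 1), (EopC (1, j) * IopC (0, j) - EopC (0, j) * IopC (1, j))

/-- The generators `{iL_{jk}, iΛ_{jk}, iV_j, iA_j}` of `uL^s`. -/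
def gensU (s : ℕ) : Set (Module.End ℂ (ExtVC s)) :=
  {f | (∃ j k : Fin (s + 1), f = Complex.I • LCop j k ∨ f = Complex.I • LamC j k) ∨
    (∃ j : Fin (s + 1), f = Complex.I • VopC j ∨ f = Complex.I • AopC j)}

/-- The real form `uL^s`, the real Lie subalgebra of `End_ℂ(⋀_ℂ V)` generated by
`{iL_{jk}, iΛ_{jk}, iV_j, iA_j}`. -/
noncomputable def uLs (s : ℕ) : LieSubalgebra ℝ (Module.End ℂ (ExtVC s)) :=
  LieSubalgebra.lieSpan ℝ _ (gensU s)

/-- The sign `ε(S)` defined by `e_S ∧ e_{Sᶜ} = ε(S)·Ω`. -/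
def eps {s : ℕ} (S : Finset (Idx s)) : ℝ :=
  (-1 : ℝ) ^ (∑ x ∈ S, ((Sᶜ).filter fun y => enc y < enc x).card)

/-- The natural Hermitian pairing `⟨α,β⟩ = i^{deg α · deg β}(α ∧ β̄, Ω)` on homogeneous
elements, extended sesquilinearly (conjugate-linear in the second argument), written out on
the orthonormal basis of monomials. -/
noncomputable def herm {s : ℕ} (a b : ExtVC s) : ℂ :=
  ∑ S : Finset (Idx s),
    Complex.I ^ (S.card * Sᶜ.card) * (eps S : ℂ) * a S * (starRingEnd ℂ) (b Sᶜ)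

/-!
Exterior multiplication `E_x` and contraction `I_x` are each self-adjoint for `⟨,⟩` up to a
constant `c` with `c² = -1`: moving `v_x ∧ ·` across `α ∧ β̄` costs `(-1)^{deg α}`, and the
degree-dependent powers of `i` in `⟨,⟩` turn this sign into the constant `c = i^{2s+1}`
(for contraction, an antiderivation that kills the top degree, `c = i^{2s+3}`). Since the `E_x`,
and likewise the `I_x`, pairwise anticommute, every product `E_x E_y` or `I_x I_y` is
self-adjoint, so `i` times it is skew-adjoint. Skew-adjoint operators form a real Lie subalgebra,
which therefore contains `uL^s`.
-/

open Finset

lemma sum_filter_mem_eq_sum_filter_notMem_insert {α M : Type*} [Fintype α] [DecidableEq α]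
    [AddCommMonoid M] (x : α) (f : Finset α → M) :
    ∑ T with x ∈ T, f T = ∑ T with x ∉ T, f (insert x T) :=
  sum_nbij' (fun T => T.erase x) (insert x) (by simp) (by simp)
    (fun T hT => insert_erase (mem_filter.1 hT).2) (fun T hT => erase_insert (mem_filter.1 hT).2)
    (fun T hT => by rw [insert_erase (mem_filter.1 hT).2])

lemma I_pow_mul_self_of_odd {n : ℕ} (hn : Odd n) : Complex.I ^ n * Complex.I ^ n = -1 := by
  obtain ⟨k, rfl⟩ := hn
  rw [← pow_add, show 2 * k + 1 + (2 * k + 1) = 4 * k + 2 by ring, pow_add, pow_mul,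
    Complex.I_pow_four, one_pow, Complex.I_sq, one_mul]

section SkewAdjoint

variable {M : Type*} [AddCommGroup M] [Module ℂ M] (B : M →ₗ[ℂ] M →ₗ⋆[ℂ] ℂ)

def skewAdjointRealLieSubalgebra : LieSubalgebra ℝ (Module.End ℂ M) where
  carrier := {f | B.IsAdjointPair B f ⇑(-f)}
  add_mem' {f g} hf hg x y := by simp [hf x y, hg x y, add_comm]
  zero_mem' x y := by simp
  smul_mem' r f hf x y := by simp [← Complex.coe_smul, hf x y]
  lie_mem' {f g} hf hg x y := by simp [Ring.lie_def, hf _, hg _]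

variable {B}

lemma I_smul_mem_skewAdjointRealLieSubalgebra {P : Module.End ℂ M} (hP : B.IsSelfAdjoint P) :
    Complex.I • P ∈ skewAdjointRealLieSubalgebra B := fun x y => by
  simp [hP x y]

lemma isSelfAdjoint_mul_of_anticomm {c : ℂ} (hc : c * c = -1) {P Q : Module.End ℂ M}
    (hP : ∀ x y, B (P x) y = c * B x (P y)) (hQ : ∀ x y, B (Q x) y = c * B x (Q y))
    (hQP : Q * P = -(P * Q)) : B.IsSelfAdjoint (P * Q) := fun x y =>
  calc B ((P * Q) x) y = c * c * B x ((Q * P) y) := by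
        rw [Module.End.mul_apply, hP, hQ, mul_assoc]; rfl
    _ = B x ((P * Q) y) := by rw [hc, hQP, LinearMap.neg_apply, map_neg]; ring

end SkewAdjoint

section Signs

variable {s : ℕ}

def encEquiv : Idx s ≃ Fin ((s + 1) * 2) := (Equiv.prodComm _ _).trans finProdFinEquiv

lemma val_encEquiv (a : Idx s) : (encEquiv a : ℕ) = enc a := by
  simp [encEquiv, enc, finProdFinEquiv, Nat.mul_comm, Nat.add_comm]

lemma enc_injective : Function.Injective (enc (s := s)) := fun a b h =>
  encEquiv.injective (Fin.ext (by rwa [val_encEquiv, val_encEquiv]))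

lemma card_filter_enc_lt (x : Idx s) : #{a : Idx s | enc a < enc x} = enc x := by
  rw [card_equiv encEquiv (t := Iio (encEquiv x)) fun a => by simp [Fin.lt_def, val_encEquiv],
    Fin.card_Iio, val_encEquiv]

lemma card_filter_enc_lt_add_card_filter_enc_gt {x : Idx s} {S : Finset (Idx s)} (hx : x ∉ S) :
    #{a ∈ S | enc a < enc x} + #{a ∈ S | enc x < enc a} = #S := by
  rw [← card_filter_add_card_filter_not (s := S) (fun a => enc a < enc x)]
  congr 2
  refine filter_congr fun a ha => ?_
  have : enc a ≠ enc x := fun h => hx (enc_injective h ▸ ha)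
  omega

lemma sgn_mul_self (T : Finset (Idx s)) (x : Idx s) : sgn T x * sgn T x = 1 := by
  simp [sgn, ← mul_pow]

lemma sgn_compl (T : Finset (Idx s)) (x : Idx s) : sgn Tᶜ x = (-1) ^ enc x * sgn T x := by
  have hsplit : #{a ∈ T | enc a < enc x} + #{a ∈ Tᶜ | enc a < enc x} = enc x := by
    rw [← card_union_of_disjoint (disjoint_filter_filter disjoint_compl_right), ← filter_union,
      union_compl, card_filter_enc_lt]
  have hsq := sgn_mul_self T x
  rw [← hsplit, pow_add]
  unfold sgn at *
  linear_combination (-(-1 : ℝ) ^ #{a ∈ Tᶜ | enc a < enc x}) * hsq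

lemma sgn_insert {y : Idx s} {T : Finset (Idx s)} (hy : y ∉ T) (x : Idx s) :
    sgn (insert y T) x = (if enc y < enc x then -1 else 1) * sgn T x := by
  unfold sgn
  rw [filter_insert]
  split_ifs with h
  · rw [card_insert_of_notMem fun h' => hy (mem_filter.1 h').1, pow_succ, mul_comm]
  · rw [one_mul]

lemma sgn_insert_self (T : Finset (Idx s)) (x : Idx s) : sgn (insert x T) x = sgn T x := by
  rw [sgn, sgn, filter_insert, if_neg (lt_irrefl _)]

lemma sgn_erase {y : Idx s} {T : Finset (Idx s)} (hy : y ∈ T) (x : Idx s) :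
    sgn (T.erase y) x = (if enc y < enc x then -1 else 1) * sgn T x := by
  conv_rhs => rw [← insert_erase hy, sgn_insert (notMem_erase y T), ← mul_assoc]
  split_ifs <;> norm_num

lemma sgn_erase_self (T : Finset (Idx s)) (x : Idx s) : sgn (T.erase x) x = sgn T x := by
  rw [sgn, sgn, filter_erase, erase_eq_of_notMem (by simp)]

lemma eps_eq_prod_sgn (S : Finset (Idx s)) : eps S = ∏ a ∈ S, sgn Sᶜ a := by
  rw [eps, ← prod_pow_eq_pow_sum]; rfl

lemma eps_insert {x : Idx s} {S : Finset (Idx s)} (hx : x ∉ S) :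
    eps (insert x S) = (-1) ^ (enc x + #S) * eps S := by
  rw [eps_eq_prod_sgn, prod_insert hx, compl_insert, sgn_erase_self, sgn_compl,
    prod_congr rfl fun a _ => sgn_erase (mem_compl.2 hx) a, prod_mul_distrib,
    ← eps_eq_prod_sgn, prod_ite, prod_const, prod_const_one, mul_one,
    ← card_filter_enc_lt_add_card_filter_enc_gt hx, pow_add, pow_add, sgn]
  ring

end Signs

section Pairing

variable {s : ℕ}

noncomputable def hermWeight (S : Finset (Idx s)) : ℂ := Complex.I ^ (#S * #Sᶜ) * (eps S : ℂ)

lemma herm_eq_sum (a b : ExtVC s) :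
    herm a b = ∑ S, hermWeight S * a S * starRingEnd ℂ (b Sᶜ) := rfl

lemma hermWeight_insert {x : Idx s} {T : Finset (Idx s)} (hx : x ∉ T) :
    hermWeight (insert x T) = Complex.I ^ (2 * s + 1) * (-1) ^ enc x * hermWeight T := by
  have hcard : #T + 1 + #(insert x T)ᶜ = 2 * (s + 1) := by
    rw [← card_insert_of_notMem hx, card_add_card_compl]; simp [mul_comm]
  have hcompl : #Tᶜ = #(insert x T)ᶜ + 1 := by
    rw [compl_insert, card_erase_add_one (mem_compl.2 hx)]
  rw [hermWeight, hermWeight, eps_insert hx, card_insert_of_notMem hx, hcompl,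
    show 2 * s + 1 = #T + #(insert x T)ᶜ by omega]
  push_cast
  rw [← Complex.I_sq]
  ring

variable (s) in
noncomputable def hermForm : ExtVC s →ₗ[ℂ] ExtVC s →ₗ⋆[ℂ] ℂ :=
  LinearMap.mk₂'ₛₗ (RingHom.id ℂ) (starRingEnd ℂ) herm
    (fun a a' b => by simp only [herm_eq_sum, PiLp.add_apply, mul_add, add_mul, sum_add_distrib])
    (fun c a b => by
      simp only [herm_eq_sum, PiLp.smul_apply, smul_eq_mul, mul_sum, RingHom.id_apply]
      exact sum_congr rfl fun _ _ => by ring)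
    (fun a b b' => by simp only [herm_eq_sum, PiLp.add_apply, map_add, mul_add, sum_add_distrib])
    (fun c a b => by
      simp only [herm_eq_sum, PiLp.smul_apply, smul_eq_mul, map_mul, mul_sum]
      exact sum_congr rfl fun _ _ => by ring)

end Pairing

section Operators

variable {s : ℕ}

lemma EopC_apply (x : Idx s) (a : ExtVC s) (T : Finset (Idx s)) :
    EopC x a T = if x ∈ T then (sgn T x : ℂ) * a (T.erase x) else 0 := by
  simp only [EopC, Matrix.ofLp_toLpLin, Matrix.toLin'_apply, Matrix.mulVec, dotProduct, Emat,
    Matrix.map_apply, Matrix.of_apply]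
  rw [Fintype.sum_eq_single (T.erase x) fun S hS => by
    rw [if_neg fun h : x ∉ S ∧ T = insert x S => hS (h.2 ▸ (erase_insert h.1).symm),
      Complex.ofReal_zero, zero_mul]]
  by_cases hx : x ∈ T
  · simp [hx, insert_erase, sgn_erase_self]
  · simp [hx, eq_comm (a := T), insert_eq_self]

lemma IopC_apply (x : Idx s) (a : ExtVC s) (T : Finset (Idx s)) :
    IopC x a T = if x ∉ T then (sgn T x : ℂ) * a (insert x T) else 0 := by
  simp only [IopC, Matrix.ofLp_toLpLin, Matrix.toLin'_apply, Matrix.mulVec, dotProduct, Imat,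
    Matrix.map_apply, Matrix.of_apply]
  rw [Fintype.sum_eq_single (insert x T) fun S hS => by
    rw [if_neg fun h : x ∈ S ∧ T = S.erase x => hS (h.2 ▸ (insert_erase h.1).symm),
      Complex.ofReal_zero, zero_mul]]
  by_cases hx : x ∈ T
  · simp [hx, eq_comm (a := T), erase_eq_self]
  · simp [hx, sgn_insert_self]

lemma EopC_mul_EopC_comm (x y : Idx s) : EopC y * EopC x = -(EopC x * EopC y) := by
  ext a T
  simp only [Module.End.mul_apply, LinearMap.neg_apply, PiLp.neg_apply, EopC_apply]
  by_cases hxy : x = y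
  · subst hxy; simp
  by_cases hxyT : x ∈ T ∧ y ∈ T
  · obtain ⟨hx, hy⟩ := hxyT
    rcases lt_or_gt_of_ne (enc_injective.ne hxy) with h | h <;>
      simp [hx, hy, hxy, Ne.symm hxy, sgn_erase, erase_right_comm, h, h.not_gt, mul_left_comm]
  · rcases not_and_or.1 hxyT with h | h <;> simp [h]

lemma IopC_mul_IopC_comm (x y : Idx s) : IopC y * IopC x = -(IopC x * IopC y) := by
  ext a T
  simp only [Module.End.mul_apply, LinearMap.neg_apply, PiLp.neg_apply, IopC_apply]
  by_cases hxy : x = y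
  · subst hxy; simp
  by_cases hxyT : x ∉ T ∧ y ∉ T
  · obtain ⟨hx, hy⟩ := hxyT
    rcases lt_or_gt_of_ne (enc_injective.ne hxy) with h | h <;>
      simp [hx, hy, hxy, Ne.symm hxy, sgn_insert, insert_comm, h, h.not_gt, mul_left_comm]
  · rcases not_and_or.1 hxyT with h | h <;> simp [not_not.1 h]

lemma herm_EopC (x : Idx s) (a b : ExtVC s) :
    herm (EopC x a) b = Complex.I ^ (2 * s + 1) * herm a (EopC x b) := by
  simp only [herm_eq_sum, EopC_apply, mul_sum, mem_compl, mul_ite, ite_mul, mul_zero, zero_mul,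
    map_zero, apply_ite (starRingEnd ℂ)]
  rw [← sum_filter, ← sum_filter, sum_filter_mem_eq_sum_filter_notMem_insert]
  refine sum_congr rfl fun T hT => ?_
  have hx : x ∉ T := (mem_filter.1 hT).2
  rw [erase_insert hx, compl_insert, sgn_insert_self, hermWeight_insert hx, sgn_compl]
  push_cast [map_mul, map_pow, map_neg, map_one, Complex.conj_ofReal]
  ring

lemma herm_IopC (x : Idx s) (a b : ExtVC s) :
    herm (IopC x a) b = Complex.I ^ (2 * s + 3) * herm a (IopC x b) := by
  simp only [herm_eq_sum, IopC_apply, mul_sum, mem_compl, mul_ite, ite_mul, mul_zero, zero_mul,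
    map_zero, apply_ite (starRingEnd ℂ), not_not]
  rw [← sum_filter, ← sum_filter, sum_filter_mem_eq_sum_filter_notMem_insert]
  refine sum_congr rfl fun T hT => ?_
  have hx : x ∉ T := (mem_filter.1 hT).2
  rw [compl_insert, insert_erase (mem_compl.2 hx), sgn_erase_self, hermWeight_insert hx, sgn_compl]
  have hc : Complex.I ^ (2 * s + 3) * Complex.I ^ (2 * s + 1) = 1 := by
    rw [← pow_add, show 2 * s + 3 + (2 * s + 1) = 4 * (s + 1) by ring, pow_mul,
      Complex.I_pow_four, one_pow]
  have hsq : ((-1 : ℂ) ^ enc x) * (-1) ^ enc x = 1 := by rw [← mul_pow]; simp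
  push_cast [map_mul, map_pow, map_neg, map_one, Complex.conj_ofReal]
  linear_combination (-(hermWeight T * sgn T x * a (insert x T) * starRingEnd ℂ (b Tᶜ))) *
    (hc + Complex.I ^ (2 * s + 3) * Complex.I ^ (2 * s + 1) * hsq)

end Operators

theorem statement_16_general (s : ℕ) :
    ∀ φ ∈ uLs s, ∀ α β : ExtVC s, herm (φ α) β + herm α (φ β) = 0 := by
  have hE (x y : Idx s) : (hermForm s).IsSelfAdjoint (EopC x * EopC y) :=
    isSelfAdjoint_mul_of_anticomm (I_pow_mul_self_of_odd ⟨s, rfl⟩) (herm_EopC x)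
      (herm_EopC y) (EopC_mul_EopC_comm x y)
  have hI (x y : Idx s) : (hermForm s).IsSelfAdjoint (IopC x * IopC y) :=
    isSelfAdjoint_mul_of_anticomm (I_pow_mul_self_of_odd ⟨s + 1, rfl⟩) (herm_IopC x)
      (herm_IopC y) (IopC_mul_IopC_comm x y)
  have hspan : uLs s ≤ skewAdjointRealLieSubalgebra (hermForm s) := by
    refine LieSubalgebra.lieSpan_le.2 ?_
    rintro f (⟨j, k, rfl | rfl⟩ | ⟨j, rfl | rfl⟩) <;>
      refine I_smul_mem_skewAdjointRealLieSubalgebra ?_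
    · rw [LCop, Fin.sum_univ_two]; exact (hE _ _).add (hE _ _)
    · rw [LamC, Fin.sum_univ_two]; exact (hI _ _).add (hI _ _)
    · exact hE _ _
    · exact hI _ _
  intro φ hφ α β
  have h : herm (φ α) β = hermForm s α (-φ β) := hspan hφ α β
  rw [h, map_neg]
  exact neg_add_cancel _

theorem statement_16 (s : ℕ) (hs : 2 ≤ s) :
    ∀ φ ∈ uLs s, ∀ α β : ExtVC s, herm (φ α) β + herm α (φ β) = 0 :=
  statement_16_general s

end GG
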